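/- For any commutative quantale V, the family λ_X : L(V^X) → V^{LX} (as defined by λ_X(σ¹,…,σⁿ)(x₁,…,xₙ) = σ¹(x₁) ⊗ ⋯ ⊗ σⁿ(xₙ), and ⊥ on lists of wrong length) is a strict distributive law of the list monad L over the V-powerset monad P_V: it satisfies strictly the unit and multiplication laws with respect to both monads, i.e., λ_X ∘ L(y_X) = y_{LX}, λ_X ∘ L(s_X) = s_{LX} ∘ (λ_X)_! ∘ λ_{P_V X}, λ_X ∘ e_{P_V X} = (e_X)_!, and λ_X ∘ m_{P_V X} = (m_X)_! ∘ λ_{LX} ∘ L(λ_X). -/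

import Mathlib

/-- The distributive law `λ_X : L(V^X) → V^{LX}`. -/
noncomputable def lamLaw {V : Type*} [CompleteLattice V] [Monoid V] {X : Type*}
    (σs : List (X → V)) : List X → V := fun xs =>
  if xs.length = σs.length then (List.zipWith (fun σ x => σ x) σs xs).prod else ⊥

/-- `(f_! σ) y = ⨆_{f x = y} σ x`. -/
noncomputable def fbang {V : Type*} [CompleteLattice V] {X Y : Type*}
    (f : X → Y) (σ : X → V) : Y → V :=
  fun y => ⨆ x : {x // f x = y}, σ x.1

/-- The unit `y_X` of the `V`-powerset monad. -/
noncomputable def yV (V : Type*) [CompleteLattice V] [Monoid V] {X : Type*}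
    [DecidableEq X] (x : X) : X → V :=
  fun x' => if x' = x then 1 else ⊥

/-- The multiplication `s_X` of the `V`-powerset monad. -/
noncomputable def sV {V : Type*} [CompleteLattice V] [Monoid V] {X : Type*}
    (Θ : (X → V) → V) : X → V :=
  fun x => ⨆ σ : X → V, Θ σ * σ x

/-! `λ` sends a cons to a product, `λ(σ :: σs)(x :: xs) = σ x ⊗ λ σs xs`, and turns concatenation
into Day convolution, `λ(σs ++ τs) xs = ⨆_{ys ++ zs = xs} λ σs ys ⊗ λ τs zs`. The `P_V`-laws and
the `L`-multiplication law then follow by induction on the list, distributing `⊗` over joins and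
regrouping the factors by commutativity. -/

section Quantale

variable {V : Type*} [CompleteLattice V]

theorem mul_iSup_of_mul_sSup [Mul V]
    (hl : ∀ (u : V) (S : Set V), u * sSup S = ⨆ v ∈ S, u * v)
    {ι : Sort*} (u : V) (f : ι → V) : u * ⨆ i, f i = ⨆ i, u * f i := by
  rw [iSup, hl, iSup_range]

theorem iSup_mul_of_mul_sSup [CommMagma V]
    (hl : ∀ (u : V) (S : Set V), u * sSup S = ⨆ v ∈ S, u * v)
    {ι : Sort*} (f : ι → V) (u : V) : (⨆ i, f i) * u = ⨆ i, f i * u := by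
  simp only [mul_comm _ u, mul_iSup_of_mul_sSup hl]

theorem mul_bot_of_mul_sSup [Mul V]
    (hl : ∀ (u : V) (S : Set V), u * sSup S = ⨆ v ∈ S, u * v)
    (u : V) : u * ⊥ = ⊥ := by
  simpa using hl u ∅

theorem bot_mul_of_mul_sSup [CommMagma V]
    (hl : ∀ (u : V) (S : Set V), u * sSup S = ⨆ v ∈ S, u * v)
    (u : V) : ⊥ * u = ⊥ := by
  rw [mul_comm, mul_bot_of_mul_sSup hl]

end Quantale

theorem iSup_list {α β : Type*} [CompleteLattice β] (f : List α → β) :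
    ⨆ l, f l = f [] ⊔ ⨆ a, ⨆ l, f (a :: l) :=
  le_antisymm
    (iSup_le fun
      | [] => le_sup_left
      | a :: l => le_sup_of_le_right (le_iSup₂_of_le a l le_rfl))
    (sup_le (le_iSup f []) (iSup₂_le fun _ _ => le_iSup f _))

section Fbang

variable {V : Type*} [CompleteLattice V] {X Y : Type*}

theorem fbang_apply_of_injective {f : X → Y} (hf : f.Injective) (σ : X → V) (x : X) :
    fbang f σ (f x) = σ x :=
  le_antisymm (iSup_le fun ⟨_, hx'⟩ => (congrArg σ (hf hx')).le) (le_iSup_of_le ⟨x, rfl⟩ le_rfl)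

theorem fbang_apply_of_notMem_range {f : X → Y} {y : Y} (hy : y ∉ Set.range f) (σ : X → V) :
    fbang f σ y = ⊥ :=
  have : IsEmpty {x // f x = y} := ⟨fun x => hy ⟨x.1, x.2⟩⟩
  iSup_of_empty _

theorem sV_fbang [CommMonoid V] (hl : ∀ (u : V) (S : Set V), u * sSup S = ⨆ v ∈ S, u * v)
    {A : Type*} (f : A → X → V) (Θ : A → V) (x : X) :
    sV (fbang f Θ) x = ⨆ a, Θ a * f a x := by
  simp only [sV, fbang, iSup_mul_of_mul_sSup hl]
  exact le_antisymm (iSup₂_le fun _ ⟨a, ha⟩ => ha ▸ le_iSup (fun a => Θ a * f a x) a)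
    (iSup_le fun a => le_iSup₂_of_le (f a) ⟨a, rfl⟩ le_rfl)

end Fbang

section LamLaw

variable {V : Type*} [CompleteLattice V] [Monoid V] {X : Type*}

theorem lamLaw_of_length_ne {σs : List (X → V)} {xs : List X} (h : xs.length ≠ σs.length) :
    lamLaw σs xs = ⊥ :=
  if_neg h

@[simp]
theorem lamLaw_nil_nil : lamLaw ([] : List (X → V)) [] = 1 :=
  rfl

@[simp]
theorem lamLaw_nil_cons (x : X) (xs : List X) : lamLaw ([] : List (X → V)) (x :: xs) = ⊥ :=
  lamLaw_of_length_ne (by simp)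

@[simp]
theorem lamLaw_cons_nil (σ : X → V) (σs : List (X → V)) : lamLaw (σ :: σs) [] = ⊥ :=
  lamLaw_of_length_ne (by simp)

theorem lamLaw_cons_cons (hl : ∀ (u : V) (S : Set V), u * sSup S = ⨆ v ∈ S, u * v)
    (σ : X → V) (σs : List (X → V)) (x : X) (xs : List X) :
    lamLaw (σ :: σs) (x :: xs) = σ x * lamLaw σs xs := by
  by_cases h : xs.length = σs.length
  · simp [lamLaw, h]
  · simp [lamLaw, h, mul_bot_of_mul_sSup hl]

theorem lamLaw_append_append (hl : ∀ (u : V) (S : Set V), u * sSup S = ⨆ v ∈ S, u * v)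
    {σs : List (X → V)} {xs : List X} (h : xs.length = σs.length) (τs : List (X → V))
    (ys : List X) : lamLaw (σs ++ τs) (xs ++ ys) = lamLaw σs xs * lamLaw τs ys := by
  induction xs generalizing σs with
  | nil =>
    rw [List.length_eq_zero_iff.mp h.symm]
    exact (one_mul _).symm
  | cons x xs ih =>
    obtain ⟨σ, σs, rfl⟩ := List.exists_cons_of_length_eq_add_one h.symm
    simp only [List.cons_append, lamLaw_cons_cons hl, ih (Nat.succ_injective h), mul_assoc]

theorem lamLaw_singleton (σ : X → V) : lamLaw [σ] = fbang (fun x : X => [x]) σ := by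
  funext xs
  by_cases h : xs ∈ Set.range (fun x : X => [x])
  · obtain ⟨x, rfl⟩ := h
    rw [fbang_apply_of_injective List.singleton_injective]
    exact mul_one _
  · rw [fbang_apply_of_notMem_range h, lamLaw_of_length_ne]
    simpa [List.length_eq_one_iff, eq_comm] using h

end LamLaw

section Laws

variable {V : Type*} [CompleteLattice V] [CommMonoid V] {X : Type*}

theorem lamLaw_append (hl : ∀ (u : V) (S : Set V), u * sSup S = ⨆ v ∈ S, u * v)
    (σs τs : List (X → V)) (xs : List X) :
    lamLaw (σs ++ τs) xs = ⨆ (ys) (zs) (_ : ys ++ zs = xs), lamLaw σs ys * lamLaw τs zs := by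
  apply le_antisymm
  · by_cases h : σs.length ≤ xs.length
    · conv_lhs => rw [← List.take_append_drop σs.length xs]
      rw [lamLaw_append_append hl (List.length_take_of_le h)]
      exact le_iSup₂_of_le _ _ (le_iSup_of_le (List.take_append_drop _ _) le_rfl)
    · rw [lamLaw_of_length_ne (by simp only [List.length_append]; omega)]
      exact bot_le
  · refine iSup₂_le fun ys zs => iSup_le fun hxs => ?_
    subst hxs
    by_cases h : ys.length = σs.length
    · rw [lamLaw_append_append hl h]
    · rw [lamLaw_of_length_ne h, bot_mul_of_mul_sSup hl]
      exact bot_le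

theorem lamLaw_map_yV [DecidableEq X] (hl : ∀ (u : V) (S : Set V), u * sSup S = ⨆ v ∈ S, u * v)
    (xs : List X) : lamLaw (xs.map (yV V)) = yV V xs := by
  funext ys
  induction xs generalizing ys with
  | nil => cases ys <;> simp [lamLaw, yV]
  | cons x xs ih =>
    cases ys with
    | nil => simp [lamLaw, yV]
    | cons y ys =>
      rw [List.map_cons, lamLaw_cons_cons hl, ih]
      by_cases h : y = x <;> simp [yV, h, bot_mul_of_mul_sSup hl]

theorem lamLaw_map_sV (hl : ∀ (u : V) (S : Set V), u * sSup S = ⨆ v ∈ S, u * v)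
    (Θs : List ((X → V) → V)) (xs : List X) :
    lamLaw (Θs.map sV) xs = ⨆ σs, lamLaw Θs σs * lamLaw σs xs := by
  induction Θs generalizing xs with
  | nil =>
    simp [iSup_list, bot_mul_of_mul_sSup hl]
  | cons Θ Θs ih =>
    rw [iSup_list, lamLaw_cons_nil, bot_mul_of_mul_sSup hl, bot_sup_eq]
    cases xs with
    | nil => simp [mul_bot_of_mul_sSup hl]
    | cons x xs =>
      simp only [List.map_cons, lamLaw_cons_cons hl, ih, sV, iSup_mul_of_mul_sSup hl,
        mul_iSup_of_mul_sSup hl, mul_mul_mul_comm]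

theorem lamLaw_flatten (hl : ∀ (u : V) (S : Set V), u * sSup S = ⨆ v ∈ S, u * v)
    (σss : List (List (X → V))) :
    lamLaw σss.flatten = fbang List.flatten (lamLaw (σss.map lamLaw)) := by
  funext xs
  induction σss generalizing xs with
  | nil =>
    apply le_antisymm
    · cases xs with
      | nil => exact le_iSup_of_le ⟨[], rfl⟩ le_rfl
      | cons x xs => simp
    · refine iSup_le fun ⟨l, hxs⟩ => ?_
      cases l with
      | nil => subst hxs; exact le_rfl
      | cons ys l => simp
  | cons σs σss ih =>
    simp only [List.flatten_cons, lamLaw_append hl, ih, fbang, mul_iSup_of_mul_sSup hl]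
    apply le_antisymm
    · exact iSup₂_le fun ys zs => iSup₂_le fun hxs ⟨l, hl'⟩ =>
        le_iSup_of_le ⟨ys :: l, by simp [hl', hxs]⟩ (lamLaw_cons_cons hl ..).ge
    · refine iSup_le fun ⟨l, hxs⟩ => ?_
      cases l with
      | nil => simp
      | cons ys l =>
        rw [List.map_cons, lamLaw_cons_cons hl]
        exact le_iSup₂_of_le ys l.flatten (le_iSup₂_of_le (by simpa using hxs) ⟨l, rfl⟩ le_rfl)

end Laws

theorem lam_strict_distributive_law_general (V : Type*) [CompleteLattice V] [CommMonoid V]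
    (hl : ∀ (u : V) (S : Set V), u * sSup S = ⨆ v ∈ S, u * v) :
    -- strict P_V-unit law
    (∀ (X : Type*) [DecidableEq X] (xs : List X),
        lamLaw (xs.map (yV V)) = yV V xs) ∧
    -- strict P_V-multiplication law
    (∀ (X : Type*) (Θs : List ((X → V) → V)),
        lamLaw (Θs.map sV) =
          sV (fbang (fun l : List (X → V) => lamLaw l) (lamLaw Θs))) ∧
    -- strict L-unit law
    (∀ (X : Type*) (σ : X → V), lamLaw [σ] = fbang (fun x : X => [x]) σ) ∧
    -- strict L-multiplication law
    (∀ (X : Type*) (σss : List (List (X → V))),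
        lamLaw σss.flatten =
          fbang (fun l : List (List X) => l.flatten)
            (lamLaw (σss.map (fun l => lamLaw l)))) := by
  refine ⟨fun X _ xs => lamLaw_map_yV hl xs, fun X Θs => ?_, fun X σ => lamLaw_singleton σ,
    fun X σss => lamLaw_flatten hl σss⟩
  funext xs
  rw [lamLaw_map_sV hl, sV_fbang hl]

/-- For a commutative quantale `V`, `λ` is a strict distributive law of the list monad
`L` (unit `x ↦ [x]`, multiplication `join`) over the `V`-powerset monad `P_V`:
`λ_X ∘ L(y_X) = y_{LX}`, `λ_X ∘ L(s_X) = s_{LX} ∘ (λ_X)_! ∘ λ_{P_V X}`,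
`λ_X ∘ e_{P_V X} = (e_X)_!`, and `λ_X ∘ m_{P_V X} = (m_X)_! ∘ λ_{LX} ∘ L(λ_X)`. -/
theorem lam_strict_distributive_law (V : Type*) [CompleteLattice V] [CommMonoid V]
    (hl : ∀ (u : V) (S : Set V), u * sSup S = ⨆ v ∈ S, u * v)
    (hr : ∀ (u : V) (S : Set V), sSup S * u = ⨆ v ∈ S, v * u) :
    -- strict P_V-unit law
    (∀ (X : Type*) [DecidableEq X] (xs : List X),
        lamLaw (xs.map (yV V)) = yV V xs) ∧
    -- strict P_V-multiplication law
    (∀ (X : Type*) (Θs : List ((X → V) → V)),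
        lamLaw (Θs.map sV) =
          sV (fbang (fun l : List (X → V) => lamLaw l) (lamLaw Θs))) ∧
    -- strict L-unit law
    (∀ (X : Type*) (σ : X → V), lamLaw [σ] = fbang (fun x : X => [x]) σ) ∧
    -- strict L-multiplication law
    (∀ (X : Type*) (σss : List (List (X → V))),
        lamLaw σss.flatten =
          fbang (fun l : List (List X) => l.flatten)
            (lamLaw (σss.map (fun l => lamLaw l)))) :=
  lam_strict_distributive_law_general V hl
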